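/- For λ ∈ ℝ with λ ≠ 0 and x ∈ M₃(ℂ) with x ≠ 0, one has 𝓛(x) = (iλ)•x if and only if either λ = ω and x = c·E₁₂ for some c ≠ 0, or λ = −ω and x = c·E₂₁ for some c ≠ 0. -/

import Mathlib

/-!
In the basis of matrix units `𝓛` is diagonal up to a single term: `𝓛(x)ᵢⱼ = dᵢⱼ xᵢⱼ` with
`dᵢⱼ = iω(δᵢ₁ − δⱼ₁) − ½(δᵢ₃ + δⱼ₃)`, except that `x₂₂` also feeds the `(3,3)` entry. Since
`d₂₂ = 0`, an eigenvalue `iλ ≠ 0` forces `x₂₂ = 0`, and then every nonzero entry `xᵢⱼ` has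
`dᵢⱼ = iλ`. The only nonzero purely imaginary `dᵢⱼ` are `d₁₂ = iω` and `d₂₁ = −iω`, and they differ
because `ω ≠ 0`.
-/

open Matrix

noncomputable section

/-- The standard matrix units `E i j` of `M₃(ℂ)` (with indices `0,1,2` for `1,2,3`). -/
def E (i j : Fin 3) : Matrix (Fin 3) (Fin 3) ℂ := Matrix.single i j 1

/-- The GKSL generator `𝓛(x) = iω[E₁₁,x] − ½(E₃₃x − 2E₃₂xE₂₃ + xE₃₃)`. -/
def gen (ω : ℝ) (x : Matrix (Fin 3) (Fin 3) ℂ) : Matrix (Fin 3) (Fin 3) ℂ :=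
  (Complex.I * (ω : ℂ)) • (E 0 0 * x - x * E 0 0)
    - (1 / 2 : ℂ) • (E 2 2 * x - 2 • (E 2 1 * x * E 1 2) + x * E 2 2)

theorem Matrix.exists_eq_single_of_forall_ne_zero {m n α : Type*} [DecidableEq m] [DecidableEq n]
    [Zero α] {x : Matrix m n α} (hx : x ≠ 0) {p : m} {q : n}
    (h : ∀ i j, x i j ≠ 0 → i = p ∧ j = q) : ∃ c, c ≠ 0 ∧ x = single p q c := by
  have hx_eq : x = single p q (x p q) := by
    ext i j
    by_cases hij : i = p ∧ j = q
    · obtain ⟨rfl, rfl⟩ := hij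
      rw [single_apply_same]
    · rw [single_apply_of_ne _ _ _ _ _ fun h' => hij ⟨h'.1.symm, h'.2.symm⟩]
      exact not_not.1 (mt (h i j) hij)
  refine ⟨x p q, fun h0 => hx ?_, hx_eq⟩
  rw [hx_eq, h0, single_zero]

-- `genCoeff ω i j` is `d_{i+1, j+1}` above.
def genCoeff (ω : ℝ) (i j : Fin 3) : ℂ :=
  Complex.I * ω * ((if i = 0 then 1 else 0) - (if j = 0 then 1 else 0))
    - 1 / 2 * ((if i = 2 then 1 else 0) + (if j = 2 then 1 else 0))

theorem gen_apply (ω : ℝ) (x : Matrix (Fin 3) (Fin 3) ℂ) (i j : Fin 3) :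
    gen ω x i j = genCoeff ω i j * x i j + if i = 2 ∧ j = 2 then x 1 1 else 0 := by
  fin_cases i <;> fin_cases j <;>
    simp [gen, genCoeff, E, mul_apply, single_apply] <;> ring

theorem gen_single (ω : ℝ) {i j : Fin 3} (hij : ¬(i = 1 ∧ j = 1)) (c : ℂ) :
    gen ω (single i j c) = genCoeff ω i j • single i j c := by
  ext k l
  rw [gen_apply, Matrix.smul_apply, smul_eq_mul, single_apply_of_ne _ _ _ 1 1 hij]
  by_cases hkl : i = k ∧ j = l
  · obtain ⟨rfl, rfl⟩ := hkl
    simp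
  · simp [single_apply_of_ne _ _ _ _ _ hkl]

theorem genCoeff_eq_I_mul_iff {ω lam : ℝ} (hlam : lam ≠ 0) {i j : Fin 3} :
    genCoeff ω i j = Complex.I * lam ↔ i = 0 ∧ j = 1 ∧ lam = ω ∨ i = 1 ∧ j = 0 ∧ lam = -ω := by
  fin_cases i <;> fin_cases j <;> simp [genCoeff, Complex.ext_iff, hlam, eq_comm]

theorem genCoeff_eq_of_gen_eq_smul {ω lam : ℝ} (hlam : lam ≠ 0)
    {x : Matrix (Fin 3) (Fin 3) ℂ} (h : gen ω x = (Complex.I * lam) • x) {i j : Fin 3}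
    (hxij : x i j ≠ 0) : genCoeff ω i j = Complex.I * lam := by
  have entry (k l : Fin 3) : genCoeff ω k l * x k l + (if k = 2 ∧ l = 2 then x 1 1 else 0)
      = Complex.I * lam * x k l := by
    rw [← gen_apply, h, Matrix.smul_apply, smul_eq_mul]
  have hx11 : x 1 1 = 0 := by
    simpa [genCoeff, hlam] using entry 1 1
  have hxij' := entry i j
  rw [hx11, ite_self, add_zero] at hxij'
  exact mul_right_cancel₀ hxij hxij'

theorem nonzero_imaginary_eigenvectors (ω : ℝ) (hω : ω ≠ 0) (lam : ℝ) (hlam : lam ≠ 0)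
    (x : Matrix (Fin 3) (Fin 3) ℂ) (hx : x ≠ 0) :
    gen ω x = (Complex.I * (lam : ℂ)) • x ↔
      (lam = ω ∧ ∃ c : ℂ, c ≠ 0 ∧ x = c • E 0 1) ∨
      (lam = -ω ∧ ∃ c : ℂ, c ≠ 0 ∧ x = c • E 1 0) := by
  have smul_E (c : ℂ) (i j : Fin 3) : c • E i j = single i j c := by simp [E]
  simp only [smul_E]
  constructor
  · intro h
    have support (i j) (hxij : x i j ≠ 0) : i = 0 ∧ j = 1 ∧ lam = ω ∨ i = 1 ∧ j = 0 ∧ lam = -ω :=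
      (genCoeff_eq_I_mul_iff hlam).1 (genCoeff_eq_of_gen_eq_smul hlam h hxij)
    obtain ⟨p, q, hpq⟩ : ∃ p q, x p q ≠ 0 := by
      by_contra! h0
      exact hx (ext h0)
    rcases support p q hpq with ⟨-, -, hl⟩ | ⟨-, -, hl⟩
    · refine .inl ⟨hl, exists_eq_single_of_forall_ne_zero hx fun i j hxij => ?_⟩
      rcases support i j hxij with ⟨hi, hj, -⟩ | ⟨-, -, hl'⟩
      exacts [⟨hi, hj⟩, absurd (by linarith : ω = 0) hω]
    · refine .inr ⟨hl, exists_eq_single_of_forall_ne_zero hx fun i j hxij => ?_⟩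
      rcases support i j hxij with ⟨-, -, hl'⟩ | ⟨hi, hj, -⟩
      exacts [absurd (by linarith : ω = 0) hω, ⟨hi, hj⟩]
  · rintro (⟨rfl, c, -, rfl⟩ | ⟨rfl, c, -, rfl⟩) <;>
      rw [gen_single _ (by decide)] <;> simp [genCoeff]

end
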